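/- arXiv:1409.1163 — 5 statements merged into one kernel-verified Lean document; each statement's English description precedes it below -/
import Mathlib

section
/- Let σ : ℝ → ℝ be defined by σ(x) = x − 0.2·sin(2πx). Then the constant λ := 0.4π − 1 satisfies 0 < λ < 1, and for every integer n and every real δ with |δ| ≤ 1/4, one has |σ(n + δ) − n| ≤ λ·|δ|. -/
/-- The error-contracting function σ(x) = x − 0.2·sin(2πx). -/
noncomputable def sigmaFn (x : ℝ) : ℝ := x - 0.2 * Real.sin (2 * Real.pi * x)

lemma sigma_key (δ : ℝ) (h0 : 0 ≤ δ) (h1 : δ ≤ 1 / 4) :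
    |δ - 0.2 * Real.sin (2 * Real.pi * δ)| ≤ (0.4 * Real.pi - 1) * δ := by
  have hpi := Real.pi_gt_three
  have hx0 : (0:ℝ) ≤ 2 * Real.pi * δ := by positivity
  have hx1 : 2 * Real.pi * δ ≤ Real.pi / 2 := by nlinarith [Real.pi_pos]
  have hlow : 2 / Real.pi * (2 * Real.pi * δ) ≤ Real.sin (2 * Real.pi * δ) :=
    Real.mul_le_sin hx0 hx1
  have hlow' : 4 * δ ≤ Real.sin (2 * Real.pi * δ) := by
    have hpi0 := Real.pi_ne_zero
    calc 4 * δ = 2 / Real.pi * (2 * Real.pi * δ) := by field_simp; ring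
    _ ≤ _ := hlow
  have hup : Real.sin (2 * Real.pi * δ) ≤ 2 * Real.pi * δ := Real.sin_le hx0
  rw [abs_le]
  constructor <;> nlinarith

lemma sigma_key' (δ : ℝ) (h : |δ| ≤ 1 / 4) :
    |δ - 0.2 * Real.sin (2 * Real.pi * δ)| ≤ (0.4 * Real.pi - 1) * |δ| := by
  rcases le_or_gt 0 δ with hd | hd
  · rw [abs_of_nonneg hd] at h ⊢
    exact sigma_key δ hd h
  · have h0 : 0 ≤ -δ := by linarith
    rw [abs_of_neg hd] at h ⊢
    have := sigma_key (-δ) h0 h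
    rw [show 2 * Real.pi * -δ = -(2 * Real.pi * δ) by ring, Real.sin_neg] at this
    rw [show -δ - 0.2 * -Real.sin (2 * Real.pi * δ)
        = -(δ - 0.2 * Real.sin (2 * Real.pi * δ)) by ring, abs_neg] at this
    exact this

/-- Proposition 3 of the paper with the explicit contraction factor λ = 0.4π − 1:
σ is a uniform contraction near every integer. -/
theorem sigma_contraction :
    0 < 0.4 * Real.pi - 1 ∧ 0.4 * Real.pi - 1 < 1 ∧
    ∀ (n : ℤ) (δ : ℝ), |δ| ≤ 1 / 4 →
      |sigmaFn ((n : ℝ) + δ) - (n : ℝ)| ≤ (0.4 * Real.pi - 1) * |δ| := by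
  have hpi3 := Real.pi_gt_three
  have hpi4 := Real.pi_lt_d2
  refine ⟨by nlinarith, by nlinarith, ?_⟩
  intro n δ h
  have hsin : Real.sin (2 * Real.pi * ((n : ℝ) + δ)) = Real.sin (2 * Real.pi * δ) := by
    have := Real.sin_add_int_mul_two_pi (2 * Real.pi * δ) n
    rw [← this]; ring_nf
  simp only [sigmaFn, hsin]
  have h2 := sigma_key' δ h
  calc |(n : ℝ) + δ - 0.2 * Real.sin (2 * Real.pi * δ) - (n : ℝ)|
      = |δ - 0.2 * Real.sin (2 * Real.pi * δ)| := by ring_nf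
    _ ≤ _ := h2
end

section
/- Let b ∈ ℝ, t₀ < t₁, γ > 0, let φ : ℝ → ℝ be continuous with φ(t) ≥ 0 for all t ∈ [t₀, t₁] and I := ∫_{t₀}^{t₁} φ(t) dt > 0, and let c ≥ 1/(2γ²·I). If y : [t₀, t₁] → ℝ is differentiable and satisfies y′(t) = c·(b − y(t))³·φ(t) for all t ∈ [t₀, t₁], then |y(t₁) − b| < γ, regardless of the initial value y(t₀). -/
/-!
With `u = b - y` the equation reads `u' = -cφ u³`, so `u²` is nonincreasing and, wherever
`u ≠ 0`, `(u²)⁻¹` has derivative exactly `2cφ`. Hence either `u` already vanishes at `t₁`, or it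
vanishes nowhere on `[t₀, t₁]` and `(u t₁ ²)⁻¹ = (u t₀ ²)⁻¹ + 2c∫φ > 2c∫φ ≥ γ⁻²`, whatever `u t₀`.
-/

open Set intervalIntegral

section NegCube

variable {u : ℝ → ℝ} {t k : ℝ}

theorem HasDerivAt.sq_of_neg_cube (hu : HasDerivAt u (-(k * u t ^ 3)) t) :
    HasDerivAt (fun s ↦ u s ^ 2) (-(2 * k * u t ^ 4)) t := by
  refine (hu.fun_pow 2).congr_deriv ?_
  push_cast
  ring

theorem HasDerivAt.inv_sq_of_neg_cube (hu : HasDerivAt u (-(k * u t ^ 3)) t) (ht : u t ≠ 0) :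
    HasDerivAt (fun s ↦ (u s ^ 2)⁻¹) (2 * k) t := by
  refine (hu.sq_of_neg_cube.fun_inv (pow_ne_zero 2 ht)).congr_deriv ?_
  field_simp

variable {k : ℝ → ℝ}

theorem antitoneOn_sq_of_hasDerivAt_neg_cube {D : Set ℝ} (hD : Convex ℝ D)
    (hu : ∀ t ∈ D, HasDerivAt u (-(k t * u t ^ 3)) t) (hk : ∀ t ∈ D, 0 ≤ k t) :
    AntitoneOn (fun t ↦ u t ^ 2) D := by
  have hsq : ∀ t ∈ D, HasDerivAt (fun s ↦ u s ^ 2) (-(2 * k t * u t ^ 4)) t :=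
    fun t ht ↦ (hu t ht).sq_of_neg_cube
  refine antitoneOn_of_hasDerivWithinAt_nonpos hD
    (fun t ht ↦ (hsq t ht).continuousAt.continuousWithinAt)
    (fun t ht ↦ (hsq t (interior_subset ht)).hasDerivWithinAt) fun t ht ↦
    neg_nonpos.2 <| mul_nonneg (mul_nonneg zero_le_two (hk t (interior_subset ht))) (by positivity)

theorem inv_sq_sub_inv_sq_eq_integral_of_hasDerivAt_neg_cube {t₀ t₁ : ℝ}
    (hu : ∀ t ∈ uIcc t₀ t₁, HasDerivAt u (-(k t * u t ^ 3)) t)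
    (hu₀ : ∀ t ∈ uIcc t₀ t₁, u t ≠ 0) (hk : IntervalIntegrable k MeasureTheory.volume t₀ t₁) :
    (u t₁ ^ 2)⁻¹ - (u t₀ ^ 2)⁻¹ = 2 * ∫ t in t₀..t₁, k t := by
  rw [← integral_const_mul]
  exact (integral_eq_sub_of_hasDerivAt (fun t ht ↦ (hu t ht).inv_sq_of_neg_cube (hu₀ t ht))
    (hk.const_mul 2)).symm

end NegCube

theorem inv_sq_le_of_le_one_div {γ c I : ℝ} (hγ : 0 < γ) (hI : 0 < I)
    (hc : c ≥ 1 / (2 * γ ^ 2 * I)) : (γ ^ 2)⁻¹ ≤ 2 * (c * I) := by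
  rw [ge_iff_le, div_le_iff₀ (by positivity)] at hc
  rw [inv_le_iff_one_le_mul₀ (by positivity)]
  linarith

open intervalIntegral in
/-- The targeting construction (Construction 1 of the paper): solutions of the
ODE y′ = c(b − y)³φ(t) reach the target b within error γ at the arrival time t₁,
whatever the departure value y(t₀), provided c ≥ 1/(2γ²∫φ). -/
theorem targeting (b t₀ t₁ γ c : ℝ) (φ y : ℝ → ℝ)
    (ht : t₀ < t₁) (hγ : 0 < γ)
    (hφcont : Continuous φ) (hφpos : ∀ t ∈ Set.Icc t₀ t₁, 0 ≤ φ t)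
    (hI : 0 < ∫ t in t₀..t₁, φ t)
    (hc : c ≥ 1 / (2 * γ ^ 2 * ∫ t in t₀..t₁, φ t))
    (hy : ∀ t ∈ Set.Icc t₀ t₁, HasDerivAt y (c * (b - y t) ^ 3 * φ t) t) :
    |y t₁ - b| < γ := by
  set u : ℝ → ℝ := fun t ↦ b - y t
  have hu : ∀ t ∈ Icc t₀ t₁, HasDerivAt u (-(c * φ t * u t ^ 3)) t := fun t ht ↦
    ((hy t ht).const_sub b).congr_deriv (by ring)
  have hgain := inv_sq_le_of_le_one_div hγ hI hc
  have hc₀ : 0 ≤ c := le_trans (by positivity) hc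
  rw [abs_sub_comm]
  by_cases hu₁ : u t₁ = 0
  · simpa [u, hu₁] using hγ
  have hanti := antitoneOn_sq_of_hasDerivAt_neg_cube (convex_Icc t₀ t₁) hu
    fun t ht ↦ mul_nonneg hc₀ (hφpos t ht)
  have hu₀ : ∀ t ∈ Icc t₀ t₁, u t ≠ 0 := fun s hs h ↦ by
    have : u t₁ ^ 2 ≤ u s ^ 2 := hanti hs (right_mem_Icc.2 ht.le) hs.2
    exact hu₁ (by simpa [h] using this)
  rw [← uIcc_of_le ht.le] at hu hu₀
  have hid := inv_sq_sub_inv_sq_eq_integral_of_hasDerivAt_neg_cube hu hu₀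
    ((hφcont.const_mul c).intervalIntegrable t₀ t₁)
  rw [integral_const_mul] at hid
  have hlt : (γ ^ 2)⁻¹ < (u t₁ ^ 2)⁻¹ := by
    have hut₀ := hu₀ t₀ left_mem_uIcc
    have : 0 < (u t₀ ^ 2)⁻¹ := by positivity
    linarith
  exact abs_lt_of_sq_lt_sq ((inv_lt_inv₀ (by positivity) (by positivity)).1 hlt) hγ.le
end

section
/- Let b ∈ ℝ, t₀ < t₁, γ > 0, ρ ≥ 0, let φ : ℝ → ℝ be continuous with φ(t) ≥ 0 for all t ∈ [t₀, t₁] and I := ∫_{t₀}^{t₁} φ(t) dt > 0, let c ≥ 1/(2γ²·I), and let b̄ : [t₀, t₁] → ℝ be continuous with |b̄(t) − b| ≤ ρ for all t ∈ [t₀, t₁]. If z̄ : [t₀, t₁] → ℝ is differentiable and satisfies z̄′(t) = c·(b̄(t) − z̄(t))³·φ(t) for all t ∈ [t₀, t₁], then |z̄(t₁) − b| < ρ + γ, regardless of the initial value z̄(t₀). -/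
/-!
Shifting by the extreme admissible targets, `w := z̄ - (b + ρ)` and `w := (b - ρ) - z̄` both
satisfy `w' ≤ -k w³` with `k := c φ ≥ 0`, since `x ↦ x³` is monotone. Such a `w` cannot cross
zero upwards, and while it stays positive `(w²)⁻¹` grows at least like `2 ∫ k`; hence
`w(t₁)⁻² > 2c ∫ φ ≥ γ⁻²`, i.e. `w(t₁) < γ`.
-/

open Set MeasureTheory

namespace CubicSubsolution

variable {k w w' : ℝ → ℝ} {a b : ℝ}

theorem nonpos_of_nonpos_left (hw : ∀ t ∈ Icc a b, HasDerivAt w (w' t) t)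
    (hk : ∀ t ∈ Icc a b, 0 ≤ k t) (hsub : ∀ t ∈ Icc a b, w' t ≤ -(k t * w t ^ 3))
    (ha : w a ≤ 0) : ∀ t ∈ Icc a b, w t ≤ 0 := by
  -- the fences `ε (t - a + 1)` have slope `ε > 0`, strictly above `w' ≤ 0` wherever they meet `w`
  have fence : ∀ ε > 0, ∀ t ∈ Icc a b, w t ≤ ε * (t - a + 1) := by
    intro ε hε
    refine image_le_of_deriv_right_lt_deriv_boundary
      (fun t ht => (hw t ht).continuousAt.continuousWithinAt)
      (fun t ht => (hw t (Ico_subset_Icc_self ht)).hasDerivWithinAt)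
      (by simpa using ha.trans hε.le) (B' := fun _ => ε)
      (fun t => by simpa using (((hasDerivAt_id t).sub_const a).add_const 1).const_mul ε) ?_
    intro t ht hwt
    have ht' := Ico_subset_Icc_self ht
    have hpos : 0 < w t := by rw [hwt]; nlinarith [ht.1]
    calc w' t ≤ -(k t * w t ^ 3) := hsub t ht'
      _ ≤ 0 := neg_nonpos.2 (mul_nonneg (hk t ht') (by positivity))
      _ < ε := hε
  intro t ht
  by_contra! hpos
  have hd : 0 < t - a + 1 := by linarith [ht.1]
  have := fence (w t / (2 * (t - a + 1))) (by positivity) t ht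
  rw [div_mul_eq_mul_div, mul_div_mul_right _ _ hd.ne'] at this
  linarith

theorem inv_sq_add_two_integral_le (hab : a ≤ b) (hw : ∀ t ∈ Icc a b, HasDerivAt w (w' t) t)
    (hpos : ∀ t ∈ Icc a b, 0 < w t) (hsub : ∀ t ∈ Icc a b, w' t ≤ -(k t * w t ^ 3))
    (hk : IntegrableOn k (Icc a b)) :
    (w a ^ 2)⁻¹ + 2 * ∫ t in a..b, k t ≤ (w b ^ 2)⁻¹ := by
  have hV : ∀ t ∈ Icc a b, HasDerivAt (fun s => (w s ^ 2)⁻¹) (-2 * w' t / w t ^ 3) t := by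
    intro t ht
    have hwt := (hpos t ht).ne'
    refine (((hw t ht).fun_pow 2).fun_inv (pow_ne_zero 2 hwt)).congr_deriv ?_
    field_simp
    ring
  have hV' : ∀ t ∈ Icc a b, 2 * k t ≤ -2 * w' t / w t ^ 3 := by
    intro t ht
    rw [le_div_iff₀ (pow_pos (hpos t ht) 3)]
    nlinarith [hsub t ht]
  have := intervalIntegral.integral_le_sub_of_hasDeriv_right_of_le hab
    (fun t ht => (hV t ht).continuousAt.continuousWithinAt)
    (fun t ht => (hV t (Ioo_subset_Icc_self ht)).hasDerivWithinAt) (hk.const_mul 2)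
    (fun t ht => hV' t (Ioo_subset_Icc_self ht))
  rw [intervalIntegral.integral_const_mul] at this
  linarith

theorem lt_of_inv_sq_le_two_integral {γ : ℝ} (hab : a ≤ b) (hγ : 0 < γ)
    (hw : ∀ t ∈ Icc a b, HasDerivAt w (w' t) t) (hk : ∀ t ∈ Icc a b, 0 ≤ k t)
    (hsub : ∀ t ∈ Icc a b, w' t ≤ -(k t * w t ^ 3)) (hki : IntegrableOn k (Icc a b))
    (hγk : (γ ^ 2)⁻¹ ≤ 2 * ∫ t in a..b, k t) : w b < γ := by
  by_contra! hγb
  by_cases hcross : ∃ s ∈ Icc a b, w s ≤ 0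
  · obtain ⟨s, hs, hws⟩ := hcross
    have hsab : Icc s b ⊆ Icc a b := Icc_subset_Icc_left hs.1
    have := nonpos_of_nonpos_left (fun t ht => hw t (hsab ht)) (fun t ht => hk t (hsab ht))
      (fun t ht => hsub t (hsab ht)) hws b ⟨hs.2, le_rfl⟩
    linarith
  · push Not at hcross
    have hgrowth := inv_sq_add_two_integral_le hab hw hcross hsub hki
    have hwb : (w b ^ 2)⁻¹ ≤ (γ ^ 2)⁻¹ := inv_anti₀ (by positivity) (pow_le_pow_left₀ hγ.le hγb 2)
    have hwa : 0 < (w a ^ 2)⁻¹ := by have := hcross a ⟨le_rfl, hab⟩; positivity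
    linarith

end CubicSubsolution

open intervalIntegral in
theorem perturbed_targeting_general (b t₀ t₁ γ ρ c : ℝ) (φ bbar zbar : ℝ → ℝ)
    (ht : t₀ < t₁) (hγ : 0 < γ)
    (hφcont : Continuous φ) (hφpos : ∀ t ∈ Set.Icc t₀ t₁, 0 ≤ φ t)
    (hI : 0 < ∫ t in t₀..t₁, φ t)
    (hc : c ≥ 1 / (2 * γ ^ 2 * ∫ t in t₀..t₁, φ t))
    (hbpert : ∀ t ∈ Set.Icc t₀ t₁, |bbar t - b| ≤ ρ)
    (hz : ∀ t ∈ Set.Icc t₀ t₁, HasDerivAt zbar (c * (bbar t - zbar t) ^ 3 * φ t) t) :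
    |zbar t₁ - b| < ρ + γ := by
  have hc0 : 0 ≤ c := le_trans (by positivity) hc
  have hk : ∀ t ∈ Icc t₀ t₁, 0 ≤ c * φ t := fun t ht => mul_nonneg hc0 (hφpos t ht)
  have hki : IntegrableOn (fun t => c * φ t) (Icc t₀ t₁) :=
    (continuous_const.mul hφcont).integrableOn_Icc
  have hγk : (γ ^ 2)⁻¹ ≤ 2 * ∫ t in t₀..t₁, c * φ t := by
    rw [ge_iff_le, div_le_iff₀ (by positivity)] at hc
    rw [intervalIntegral.integral_const_mul, inv_le_iff_one_le_mul₀ (by positivity)]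
    linarith
  have hcube : ∀ t ∈ Icc t₀ t₁, ∀ x y : ℝ, x ≤ y → c * φ t * x ^ 3 ≤ c * φ t * y ^ 3 :=
    fun t ht x y hxy => mul_le_mul_of_nonneg_left ((Odd.pow_le_pow (by decide)).2 hxy) (hk t ht)
  have upper : zbar t₁ - (b + ρ) < γ := by
    refine CubicSubsolution.lt_of_inv_sq_le_two_integral (w := fun t => zbar t - (b + ρ))
      ht.le hγ (fun t ht => (hz t ht).sub_const (b + ρ)) hk (fun t ht => ?_) hki hγk
    have := hcube t ht (bbar t - zbar t) (b + ρ - zbar t)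
      (by linarith [(abs_le.1 (hbpert t ht)).2])
    linear_combination this
  have lower : (b - ρ) - zbar t₁ < γ := by
    refine CubicSubsolution.lt_of_inv_sq_le_two_integral (w := fun t => b - ρ - zbar t)
      ht.le hγ (fun t ht => (hz t ht).const_sub (b - ρ)) hk (fun t ht => ?_) hki hγk
    have := hcube t ht (b - ρ - zbar t) (bbar t - zbar t)
      (by linarith [(abs_le.1 (hbpert t ht)).1])
    linear_combination this
  rw [abs_lt]
  constructor <;> linarith

open intervalIntegral in
/-- The perturbed targeting estimate: if the target value b of the targeting ODE
is perturbed by at most ρ, the targeting error at arrival time grows by at most ρ. -/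
theorem perturbed_targeting (b t₀ t₁ γ ρ c : ℝ) (φ bbar zbar : ℝ → ℝ)
    (ht : t₀ < t₁) (hγ : 0 < γ) (hρ : 0 ≤ ρ)
    (hφcont : Continuous φ) (hφpos : ∀ t ∈ Set.Icc t₀ t₁, 0 ≤ φ t)
    (hI : 0 < ∫ t in t₀..t₁, φ t)
    (hc : c ≥ 1 / (2 * γ ^ 2 * ∫ t in t₀..t₁, φ t))
    (hbcont : ContinuousOn bbar (Set.Icc t₀ t₁))
    (hbpert : ∀ t ∈ Set.Icc t₀ t₁, |bbar t - b| ≤ ρ)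
    (hz : ∀ t ∈ Set.Icc t₀ t₁, HasDerivAt zbar (c * (bbar t - zbar t) ^ 3 * φ t) t) :
    |zbar t₁ - b| < ρ + γ :=
  perturbed_targeting_general b t₀ t₁ γ ρ c φ bbar zbar ht hγ hφcont hφpos hI hc hbpert hz
end

section
/- Fix an integer k ≥ 2 and define θ_k : ℝ → ℝ by θ_k(x) = x^k for x > 0 and θ_k(x) = 0 for x ≤ 0. Then I_k := ∫_{1/2}^{1} θ_k(−sin(2πx)) dx > 0, and the function s : ℝ → ℝ defined by s(x) = (1/I_k)·∫_{0}^{x} θ_k(−sin(2πt)) dt satisfies s(x) = j for every integer j and every x ∈ [j, j + 1/2]. Consequently, the function r(x) := s(x + 1/4) satisfies r(x) = j for every integer j and every x ∈ [j − 1/4, j + 1/4]. -/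
/-- Construction 2 of the paper: the staircase function s built from the
C^{k−1} Heaviside-like function θ_k matches the identity on the integers and is
constant on [j, j+1/2]; the shifted function r(x) = s(x + 1/4) satisfies r(x) = j
for x ∈ [j − 1/4, j + 1/4]. -/
theorem staircase (k : ℕ) (hk : 2 ≤ k) (θ s r : ℝ → ℝ)
    (hθ : ∀ x, θ x = if 0 < x then x ^ k else 0)
    (hs : ∀ x, s x =
      (1 / ∫ u in (1/2 : ℝ)..1, θ (-Real.sin (2 * Real.pi * u))) *
        ∫ t in (0 : ℝ)..x, θ (-Real.sin (2 * Real.pi * t)))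
    (hr : ∀ x, r x = s (x + 1 / 4)) :
    (0 < ∫ u in (1/2 : ℝ)..1, θ (-Real.sin (2 * Real.pi * u))) ∧
    (∀ j : ℤ, ∀ x ∈ Set.Icc (j : ℝ) ((j : ℝ) + 1 / 2), s x = (j : ℝ)) ∧
    (∀ j : ℤ, ∀ x ∈ Set.Icc ((j : ℝ) - 1 / 4) ((j : ℝ) + 1 / 4), r x = (j : ℝ)) := by
  have hk1 : k ≠ 0 := by omega
  set f : ℝ → ℝ := fun t => θ (-Real.sin (2 * Real.pi * t)) with hf
  -- θ x = (max x 0)^k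
  have hθmax : ∀ x, θ x = (max x 0) ^ k := by
    intro x
    rw [hθ]
    rcases lt_or_ge 0 x with h | h
    · rw [if_pos h, max_eq_left h.le]
    · rw [if_neg (not_lt.mpr h), max_eq_right h, zero_pow hk1]
  have hcont : Continuous f := by
    have : f = fun t => (max (-Real.sin (2 * Real.pi * t)) 0) ^ k := by
      funext t; exact hθmax _
    rw [this]
    exact (((Real.continuous_sin.comp (continuous_const.mul continuous_id)).neg.max
      continuous_const).pow k)
  have hint : ∀ a b : ℝ, IntervalIntegrable f MeasureTheory.volume a b :=
    fun a b => hcont.intervalIntegrable a b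
  have hper : Function.Periodic f 1 := by
    intro t
    simp only [hf]
    rw [mul_add, mul_one, Real.sin_add_two_pi]
  -- f vanishes on [0, 1/2]
  have hzero : ∀ t ∈ Set.Icc (0:ℝ) (1/2), f t = 0 := by
    intro t ht
    have hsin : 0 ≤ Real.sin (2 * Real.pi * t) := by
      apply Real.sin_nonneg_of_nonneg_of_le_pi
      · nlinarith [Real.pi_pos, ht.1]
      · nlinarith [Real.pi_pos, ht.2]
    simp only [hf]
    rw [hθmax, max_eq_right (by linarith), zero_pow hk1]
  -- positivity of I
  have hIpos : 0 < ∫ u in (1/2 : ℝ)..1, f u := by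
    apply intervalIntegral.intervalIntegral_pos_of_pos_on (hint _ _)
    · intro x hx
      have h1 : Real.sin (2 * Real.pi * x) < 0 := by
        have : Real.sin (2 * Real.pi * x) = Real.sin (2 * Real.pi * x - 2 * Real.pi) := by
          rw [Real.sin_sub_two_pi]
        rw [this]
        apply Real.sin_neg_of_neg_of_neg_pi_lt
        · nlinarith [Real.pi_pos, hx.2]
        · nlinarith [Real.pi_pos, hx.1]
      simp only [hf]
      rw [hθmax, max_eq_left (by linarith)]
      exact pow_pos (by linarith) k
    · norm_num
  -- integral over one period
  have hone : (∫ u in (0:ℝ)..1, f u) = ∫ u in (1/2:ℝ)..1, f u := by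
    rw [← intervalIntegral.integral_add_adjacent_intervals (hint 0 (1/2)) (hint (1/2) 1)]
    have : (∫ u in (0:ℝ)..(1/2), f u) = 0 := by
      rw [intervalIntegral.integral_congr (g := fun _ => (0:ℝ))]
      · simp
      · intro t ht
        rw [Set.uIcc_of_le (by norm_num)] at ht
        exact hzero t ht
    rw [this, zero_add]
  -- main computation: ∫_0^x f = j * I for x ∈ [j, j+1/2]
  have hmain : ∀ j : ℤ, ∀ x ∈ Set.Icc (j : ℝ) ((j : ℝ) + 1 / 2),
      (∫ t in (0:ℝ)..x, f t) = (j : ℝ) * ∫ u in (1/2:ℝ)..1, f u := by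
    intro j x hx
    have hj : (∫ t in (0:ℝ)..(j:ℝ), f t) = (j : ℝ) * ∫ u in (1/2:ℝ)..1, f u := by
      have := hper.intervalIntegral_add_zsmul_eq j 0 hint
      simp only [zsmul_eq_mul, mul_one, zero_add] at this
      rw [this, hone]
    have hshift : (∫ t in (j:ℝ)..x, f t) = 0 := by
      have h1 : (∫ t in (j:ℝ)..x, f t) = ∫ t in (0:ℝ)..(x - j), f (t + j) := by
        rw [intervalIntegral.integral_comp_add_right]
        norm_num
      have h2 : ∀ t : ℝ, f (t + j) = f t := by
        intro t
        have := (hper.zsmul j) t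
        simpa using this
      rw [h1]
      simp only [h2]
      rw [intervalIntegral.integral_congr (g := fun _ => (0:ℝ))]
      · simp
      · intro t ht
        rw [Set.uIcc_of_le (by linarith [hx.1])] at ht
        exact hzero t ⟨ht.1, by linarith [ht.2, hx.2]⟩
    rw [← intervalIntegral.integral_add_adjacent_intervals (hint 0 (j:ℝ)) (hint (j:ℝ) x),
      hj, hshift, add_zero]
  have hs' : ∀ j : ℤ, ∀ x ∈ Set.Icc (j : ℝ) ((j : ℝ) + 1 / 2), s x = (j : ℝ) := by
    intro j x hx
    rw [hs x]
    show (1 / ∫ u in (1/2:ℝ)..1, f u) * (∫ t in (0:ℝ)..x, f t) = (j:ℝ)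
    rw [hmain j x hx]
    field_simp
  refine ⟨hIpos, hs', ?_⟩
  intro j x hx
  rw [hr x]
  apply hs' j
  constructor <;> [linarith [hx.1]; linarith [hx.2]]
end

section
/- Let σ(x) = x − 0.2·sin(2πx), λ := 0.4π − 1, and let ω̄ : ℝ → ℝ be a differentiable function with |ω̄′(x)| ≤ K for all x ∈ ℝ, where K > 0. Let k ∈ ℕ satisfy K·λ^k ≤ 1, and define ω = ω̄ ∘ σ^[k] (the composition of ω̄ with the k-th iterate of σ). Then for every integer n, every ε with 0 ≤ ε ≤ 1/4, and every y ∈ ℝ with |y − n| ≤ ε, one has ω(n) = ω̄(n) and |ω(y) − ω̄(n)| ≤ ε. -/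
lemma aux_nonneg (t : ℝ) (h0 : 0 ≤ t) (h1 : t ≤ 1/4) :
    |t - 0.2 * Real.sin (2 * Real.pi * t)| ≤ (0.4 * Real.pi - 1) * t := by
  have hπ3 := Real.pi_gt_three
  have hπ := Real.pi_pos
  have hs1 : Real.sin (2*Real.pi*t) ≤ 2*Real.pi*t := Real.sin_le (by positivity)
  have hs2 : 2/Real.pi * (2*Real.pi*t) ≤ Real.sin (2*Real.pi*t) :=
    Real.mul_le_sin (by positivity) (by nlinarith)
  have heq : 2/Real.pi * (2*Real.pi*t) = 4*t := by field_simp; ring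
  rw [heq] at hs2
  rw [abs_le]
  constructor <;> nlinarith

lemma sigma_fix (n : ℤ) : sigmaFn (n : ℝ) = (n : ℝ) := by
  have : Real.sin (2 * Real.pi * n) = 0 := by
    rw [show (2 * Real.pi * (n:ℝ)) = 0 + n * (2 * Real.pi) by ring,
      Real.sin_add_int_mul_two_pi, Real.sin_zero]
  simp [sigmaFn, this]

lemma sigma_contract (n : ℤ) (y : ℝ) (h : |y - (n:ℝ)| ≤ 1/4) :
    |sigmaFn y - n| ≤ (0.4 * Real.pi - 1) * |y - (n:ℝ)| := by
  set t := y - (n:ℝ) with ht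
  have hsin : Real.sin (2 * Real.pi * y) = Real.sin (2 * Real.pi * t) := by
    have : 2 * Real.pi * y = 2 * Real.pi * t + n * (2 * Real.pi) := by rw [ht]; ring
    rw [this, Real.sin_add_int_mul_two_pi]
  have hσ : sigmaFn y - n = t - 0.2 * Real.sin (2 * Real.pi * t) := by
    simp [sigmaFn, hsin]; ring
  rw [hσ]
  rcases le_or_gt 0 t with h0 | h0
  · rw [abs_of_nonneg h0]
    exact aux_nonneg t h0 (by rwa [abs_of_nonneg h0] at h)
  · have h0' : 0 ≤ -t := by linarith
    have h1' : -t ≤ 1/4 := by rwa [abs_of_neg h0] at h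
    have := aux_nonneg (-t) h0' h1'
    have hneg : Real.sin (2 * Real.pi * (-t)) = - Real.sin (2 * Real.pi * t) := by
      rw [show 2 * Real.pi * (-t) = -(2 * Real.pi * t) by ring, Real.sin_neg]
    rw [hneg] at this
    rw [abs_of_neg h0]
    calc |t - 0.2 * Real.sin (2 * Real.pi * t)|
        = |-t - 0.2 * -Real.sin (2 * Real.pi * t)| := by rw [abs_sub_comm]; congr 1; ring
      _ ≤ (0.4 * Real.pi - 1) * (-t) := this

/-- Section 4.3.2 of the paper: pre-composing a Lipschitz interpolating function ω̄
with enough iterates of σ makes it non-expanding around integers while preserving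
its values at integers. -/
theorem omega_nonexpanding (K : ℝ) (hK : 0 < K) (ωbar : ℝ → ℝ)
    (hdiff : Differentiable ℝ ωbar) (hK' : ∀ x : ℝ, |deriv ωbar x| ≤ K)
    (k : ℕ) (hk : K * (0.4 * Real.pi - 1) ^ k ≤ 1)
    (ω : ℝ → ℝ) (hω : ω = ωbar ∘ sigmaFn^[k]) :
    ∀ (n : ℤ) (ε : ℝ), 0 ≤ ε → ε ≤ 1 / 4 →
      ∀ y : ℝ, |y - (n : ℝ)| ≤ ε →
        ω (n : ℝ) = ωbar (n : ℝ) ∧ |ω y - ωbar (n : ℝ)| ≤ ε := by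
  intro n ε hε0 hε4 y hy
  have hπ3 := Real.pi_gt_three
  have hπ4 := Real.pi_lt_d2
  set lam := 0.4 * Real.pi - 1 with hlam
  have hlam0 : 0 ≤ lam := by rw [hlam]; nlinarith
  have hlam1 : lam ≤ 1 := by rw [hlam]; nlinarith
  -- iterate contraction
  have hiter : ∀ m : ℕ, |sigmaFn^[m] y - (n:ℝ)| ≤ lam ^ m * |y - (n:ℝ)| := by
    intro m
    induction m with
    | zero => simp
    | succ m ih =>
      have hb : |sigmaFn^[m] y - (n:ℝ)| ≤ 1/4 := by
        calc |sigmaFn^[m] y - (n:ℝ)| ≤ lam ^ m * |y - (n:ℝ)| := ih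
          _ ≤ 1 * (1/4) := by
              apply mul_le_mul (pow_le_one₀ hlam0 hlam1) (le_trans hy hε4) (abs_nonneg _) one_pos.le
          _ = 1/4 := by norm_num
      rw [Function.iterate_succ_apply']
      calc |sigmaFn (sigmaFn^[m] y) - (n:ℝ)| ≤ lam * |sigmaFn^[m] y - (n:ℝ)| :=
            sigma_contract n _ hb
        _ ≤ lam * (lam ^ m * |y - (n:ℝ)|) := by
            exact mul_le_mul_of_nonneg_left ih hlam0
        _ = lam ^ (m+1) * |y - (n:ℝ)| := by ring
  have hfix : sigmaFn^[k] (n:ℝ) = (n:ℝ) := Function.iterate_fixed (sigma_fix n) k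
  have lip : LipschitzWith K.toNNReal ωbar := by
    apply lipschitzWith_of_nnnorm_deriv_le hdiff
    intro x
    rw [← NNReal.coe_le_coe, coe_nnnorm, Real.norm_eq_abs, Real.coe_toNNReal _ hK.le]
    exact hK' x
  have hlip : ∀ a b : ℝ, |ωbar a - ωbar b| ≤ K * |a - b| := by
    intro a b
    have := lip.dist_le_mul a b
    rwa [Real.dist_eq, Real.dist_eq, Real.coe_toNNReal _ hK.le] at this
  constructor
  · rw [hω]; simp [Function.comp, hfix]
  · rw [hω]
    simp only [Function.comp]
    calc |ωbar (sigmaFn^[k] y) - ωbar (n:ℝ)| ≤ K * |sigmaFn^[k] y - (n:ℝ)| := hlip _ _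
      _ ≤ K * (lam ^ k * |y - (n:ℝ)|) := mul_le_mul_of_nonneg_left (hiter k) hK.le
      _ ≤ 1 * ε := by nlinarith [abs_nonneg (y - (n:ℝ)), pow_nonneg hlam0 k]
      _ = ε := one_mul ε
end
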